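/- Let T ≥ 1 be an integer, Y₁,…,Yₙ i.i.d. symmetric real random variables, and x = (x₁,…,xₙ) ∈ ℝⁿ with ||x||₂ ≤ 1 and ||x||_∞ < v. Then ||Σ_i Y_ix_i||_{2T} ≲ v·sup_{1≤t≤T} (T/t)·(1/(Tv²))^{1/(2t)}·||Y₁||_{2t}, where the supremum is over integers t. -/

import Mathlib

open MeasureTheory ProbabilityTheory Real Finset
open scoped BigOperators ENNReal NNReal Classical

noncomputable section

/-- Euclidean (`ℓ₂`) norm of a finite real vector. -/
def l2 {k : ℕ} (x : Fin k → ℝ) : ℝ := Real.sqrt (∑ i, x i ^ 2)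

/-- Sup (`ℓ_∞`) norm of a finite real vector. -/
def linf {k : ℕ} (x : Fin k → ℝ) : ℝ := ⨆ i, |x i|

/-- The moment norm `‖X‖_q = (E |X|^q)^{1/q}`. -/
def mom {Ω : Type*} [MeasurableSpace Ω] (μ : Measure Ω) (q : ℝ) (X : Ω → ℝ) : ℝ :=
  (∫ ω, |X ω| ^ q ∂μ) ^ (1 / q)

/-- A sparse JL distribution, presented by the random families `σ` (Rademachers) and
`η` (Bernoulli selectors) on a probability space. -/
structure SparseJL {Ω : Type*} [MeasurableSpace Ω] (μ : Measure Ω) (n m s : ℕ) where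
  σ : Fin m → Fin n → Ω → ℝ
  η : Fin m → Fin n → Ω → ℝ
  σ_meas : ∀ r i, Measurable (σ r i)
  η_meas : ∀ r i, Measurable (η r i)
  σ_rademacher : ∀ r i, μ {ω | σ r i ω = 1} = 1/2 ∧ μ {ω | σ r i ω = -1} = 1/2
  σ_indep : iIndepFun
      (fun (p : Fin m × Fin n) ω => σ p.1 p.2 ω) μ
  η_bool : ∀ r i ω, η r i ω = 0 ∨ η r i ω = 1
  η_mean : ∀ r i, ∫ ω, η r i ω ∂μ = (s : ℝ) / (m : ℝ)
  σ_η_indep : IndepFun (fun ω (p : Fin m × Fin n) => σ p.1 p.2 ω)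
      (fun ω (p : Fin m × Fin n) => η p.1 p.2 ω) μ
  η_cols_indep : iIndepFun
      (fun (i : Fin n) ω (r : Fin m) => η r i ω) μ
  η_col_sum : ∀ i ω, ∑ r, η r i ω = (s : ℝ)
  η_neg_corr : ∀ i (S : Finset (Fin m)),
      ∫ ω, ∏ r ∈ S, η r i ω ∂μ ≤ ((s : ℝ) / (m : ℝ)) ^ S.card

/-- A uniform sparse JL distribution: each column's support is a uniformly random
`s`-subset of the rows. -/
structure UniformSparseJL {Ω : Type*} [MeasurableSpace Ω] (μ : Measure Ω) (n m s : ℕ)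
    extends SparseJL μ n m s where
  uniform : ∀ (i : Fin n) (S : Finset (Fin m)), S.card = s →
      μ {ω | ∀ r, η r i ω = if r ∈ S then 1 else 0} = ((Nat.choose m s : ℝ≥0∞))⁻¹

namespace SparseJL

variable {Ω : Type*} [MeasurableSpace Ω] {μ : Measure Ω} {n m s : ℕ}

/-- The random matrix entry `A_{r,i} = η_{r,i} σ_{r,i} / √s`. -/
def A (J : SparseJL μ n m s) (ω : Ω) (r : Fin m) (i : Fin n) : ℝ :=
  J.η r i ω * J.σ r i ω / Real.sqrt s

/-- The row error term `Z_r(x) = Σ_{i ≠ j} η_{r,i} η_{r,j} σ_{r,i} σ_{r,j} x_i x_j`. -/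
def Z (J : SparseJL μ n m s) (r : Fin m) (x : Fin n → ℝ) (ω : Ω) : ℝ :=
  ∑ i, ∑ j, if i ≠ j then
    J.η r i ω * J.η r j ω * J.σ r i ω * J.σ r j ω * x i * x j else 0

/-- The error term `R(x) = (1/s) Σ_r Z_r(x)`. -/
def R (J : SparseJL μ n m s) (x : Fin n → ℝ) (ω : Ω) : ℝ :=
  (1 / (s : ℝ)) * ∑ r, J.Z r x ω

/-- `v(m, ε, δ, s)`: the sup of all `v ∈ [0,1]` such that the JL norm-preservation
condition holds with distortion `ε` and failure probability `δ` on
`S_v = {x : ‖x‖_∞ ≤ v ‖x‖₂}`. -/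
def vstat (J : SparseJL μ n m s) (ε δ : ℝ) : ℝ :=
  sSup {v : ℝ | v ∈ Set.Icc (0:ℝ) 1 ∧ ∀ x : Fin n → ℝ, linf x ≤ v * l2 x →
    ENNReal.ofReal (1 - δ) <
      μ {ω | (1 - ε) * l2 x ≤ l2 (fun r => ∑ i, J.A ω r i * x i) ∧
             l2 (fun r => ∑ i, J.A ω r i * x i) ≤ (1 + ε) * l2 x}}

end SparseJL

/-- The vector `(v, …, v, 0, …, 0)` with `N` nonzero coordinates. -/
def vVec (n N : ℕ) (v : ℝ) : Fin n → ℝ := fun i => if (i : ℕ) < N then v else 0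

/-- Decreasing rearrangement of a finite tuple of reals. -/
def decSort {k : ℕ} (w : Fin k → ℝ) : Fin k → ℝ := w ∘ (Tuple.sort (fun i => -w i))


/-!
Expand `E (∑ Yᵢ xᵢ)^{2T}` by the multinomial theorem and independence. Odd moments vanish by
symmetry, and the supremum `K` on the right bounds every even moment:
`E Y^{2t} ≤ (t/T)^{2t} T v² K^{2t}`. As `x^{2t} v² ≤ v^{2t} x²` when `|x| ≤ v`, the term of an
exponent vector `d` is at most `(vK)^{2T}` times `multinomial d ∏ (dᵢ/2T)^{dᵢ} ≤ 1` (a single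
term of `(∑ dᵢ/2T)^{2T} = 1`) times `∏_{dᵢ ≠ 0} T xᵢ²`. Weighting by `2^{-dᵢ}` bounds the sum of
the last products by `4^T ∏ (1 + T xᵢ²) ≤ 4^T e^{T ‖x‖²} ≤ 16^T`, whence `‖∑ Yᵢ xᵢ‖_{2T} ≤ 4vK`.

If `Y₁ ∉ L^{2T}`, the left side is the junk value `0` of a non-integrable integral: when
`xᵢ ≠ 0`, flipping the signs of all `Yⱼ` with `j ≠ i` preserves the joint law, so
`∑ Yⱼ xⱼ ∈ L^{2T}` would give `2 Yᵢ xᵢ ∈ L^{2T}`.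
-/

namespace Finset

variable {ι : Type*} [Fintype ι]

theorem abs_prod_pow_le_sum_abs_pow (z : ι → ℝ) (d : ι → ℕ) :
    |∏ i, z i ^ d i| ≤ (∑ i, |z i|) ^ ∑ i, d i := by
  rw [← prod_pow_eq_pow_sum, abs_prod]
  gcongr with i
  rw [abs_pow]
  exact pow_le_pow_left₀ (abs_nonneg _)
    (single_le_sum (fun j _ => abs_nonneg (z j)) (mem_univ i)) _

variable [DecidableEq ι]

theorem multinomial_mul_prod_div_pow_le_one (d : ι → ℕ) :
    (Nat.multinomial univ d : ℝ) * ∏ i, ((d i : ℝ) / ∑ j, d j) ^ d i ≤ 1 := by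
  have hsum : (∑ i, (d i : ℝ) / ∑ j, (d j : ℝ)) ^ ∑ j, d j = 1 := by
    rcases Nat.eq_zero_or_pos (∑ j, d j) with h | h
    · rw [h, pow_zero]
    · rw [← sum_div, div_self (by exact_mod_cast h.ne'), one_pow]
  rw [← hsum, sum_pow_eq_sum_piAntidiag]
  push_cast
  exact single_le_sum (f := fun e => (Nat.multinomial univ e : ℝ) *
      ∏ i, ((d i : ℝ) / ∑ j, (d j : ℝ)) ^ e i)
    (fun e _ => by positivity) (by simp)

theorem sum_piAntidiag_prod_le (N : ℕ) (f : ι → ℕ → ℝ) (hf : ∀ i k, 0 ≤ f i k) :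
    ∑ d ∈ piAntidiag univ N, ∏ i, f i (d i) ≤
      2 ^ N * ∏ i, ∑ k ∈ range (N + 1), f i k / 2 ^ k := by
  rw [prod_univ_sum, mul_sum]
  calc ∑ d ∈ piAntidiag univ N, ∏ i, f i (d i)
      = ∑ d ∈ piAntidiag univ N, 2 ^ N * ∏ i, f i (d i) / 2 ^ d i := by
        refine sum_congr rfl fun d hd => ?_
        rw [← (mem_piAntidiag.1 hd).1, ← prod_pow_eq_pow_sum, ← prod_mul_distrib]
        refine prod_congr rfl fun i _ => ?_
        field_simp
    _ ≤ _ := by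
        refine sum_le_sum_of_subset_of_nonneg (fun d hd => ?_) fun d _ _ =>
          mul_nonneg (by positivity) (prod_nonneg fun i _ => div_nonneg (hf _ _) (by positivity))
        rw [Fintype.mem_piFinset]
        intro i
        rw [mem_range, Nat.lt_succ_iff, ← (mem_piAntidiag.1 hd).1]
        exact single_le_sum (fun j _ => Nat.zero_le (d j)) (mem_univ i)

end Finset

theorem sum_range_ite_div_two_pow_le {z : ℝ} (hz : 0 ≤ z) (N : ℕ) :
    ∑ k ∈ Finset.range (N + 1), (if k = 0 then 1 else z) / 2 ^ k ≤ 1 + z := by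
  rw [Finset.sum_range_succ']
  simp only [if_pos, Nat.succ_ne_zero, if_false, pow_zero, div_one]
  have hgeom := sum_geometric_two_le N
  calc ∑ k ∈ Finset.range N, z / 2 ^ (k + 1) + 1
      = z / 2 * ∑ k ∈ Finset.range N, (1 / 2 : ℝ) ^ k + 1 := by
        rw [Finset.mul_sum]
        congr 1
        refine Finset.sum_congr rfl fun k _ => ?_
        rw [pow_succ, one_div_pow]
        field_simp
    _ ≤ z / 2 * 2 + 1 := by gcongr
    _ = 1 + z := by ring

section MomentCombinatorics

variable {T : ℕ} {v K : ℝ} {I : ℕ → ℝ}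

theorem pow_mul_moment_nonneg (hIodd : ∀ k, Odd k → I k = 0) (hIeven : ∀ k, Even k → 0 ≤ I k)
    (x : ℝ) (k : ℕ) : 0 ≤ x ^ k * I k := by
  rcases Nat.even_or_odd k with hk | hk
  · exact mul_nonneg (hk.pow_nonneg x) (hIeven k hk)
  · rw [hIodd k hk, mul_zero]

theorem pow_two_mul_mul_sq_le {x v : ℝ} (hx : |x| ≤ v) {t : ℕ} (ht : t ≠ 0) :
    x ^ (2 * t) * v ^ 2 ≤ v ^ (2 * t) * x ^ 2 := by
  obtain ⟨s, rfl⟩ := Nat.exists_eq_succ_of_ne_zero ht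
  have hx2 : x ^ 2 ≤ v ^ 2 := by
    rw [← sq_abs]
    exact pow_le_pow_left₀ (abs_nonneg x) hx 2
  rw [pow_mul, pow_mul]
  calc (x ^ 2) ^ (s + 1) * v ^ 2 = x ^ 2 * v ^ 2 * (x ^ 2) ^ s := by ring
    _ ≤ x ^ 2 * v ^ 2 * (v ^ 2) ^ s := by gcongr
    _ = (v ^ 2) ^ (s + 1) * x ^ 2 := by ring

theorem pow_mul_moment_le {x : ℝ} (hx : |x| ≤ v) (hK : 0 ≤ K) (hI0 : I 0 = 1)
    (hIodd : ∀ k, Odd k → I k = 0)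
    (hIle : ∀ t : ℕ, 1 ≤ t → t ≤ T →
      I (2 * t) ≤ ((t : ℝ) / T) ^ (2 * t) * (T * v ^ 2) * K ^ (2 * t))
    {k : ℕ} (hk : k ≤ 2 * T) :
    x ^ k * I k ≤ ((k : ℝ) / (2 * T)) ^ k * (v * K) ^ k * (if k = 0 then 1 else T * x ^ 2) := by
  have hv : 0 ≤ v := (abs_nonneg x).trans hx
  rcases Nat.even_or_odd k with hk' | hk'
  · obtain ⟨t, rfl⟩ := even_iff_two_dvd.mp hk'
    rcases eq_or_ne t 0 with rfl | ht
    · simp [hI0]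
    have hratio : ((2 * t : ℕ) : ℝ) / (2 * T) = (t : ℝ) / T := by
      push_cast
      exact mul_div_mul_left _ _ two_ne_zero
    rw [if_neg (by omega), hratio, mul_pow]
    calc x ^ (2 * t) * I (2 * t)
        ≤ x ^ (2 * t) * (((t : ℝ) / T) ^ (2 * t) * (T * v ^ 2) * K ^ (2 * t)) :=
          mul_le_mul_of_nonneg_left (hIle t (by omega) (by omega)) (hk'.pow_nonneg x)
      _ = ((t : ℝ) / T) ^ (2 * t) * K ^ (2 * t) * T * (x ^ (2 * t) * v ^ 2) := by ring
      _ ≤ ((t : ℝ) / T) ^ (2 * t) * K ^ (2 * t) * T * (v ^ (2 * t) * x ^ 2) :=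
          mul_le_mul_of_nonneg_left (pow_two_mul_mul_sq_le hx ht) (by positivity)
      _ = _ := by ring
  · rw [hIodd k hk', mul_zero]
    split_ifs <;> positivity

theorem sum_multinomial_mul_prod_moment_le {ι : Type*} [Fintype ι] [DecidableEq ι]
    {x : ι → ℝ} (hx : ∀ i, |x i| ≤ v) (hx2 : ∑ i, x i ^ 2 ≤ 1) (hK : 0 ≤ K) (hI0 : I 0 = 1)
    (hIodd : ∀ k, Odd k → I k = 0) (hIeven : ∀ k, Even k → 0 ≤ I k)
    (hIle : ∀ t : ℕ, 1 ≤ t → t ≤ T →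
      I (2 * t) ≤ ((t : ℝ) / T) ^ (2 * t) * (T * v ^ 2) * K ^ (2 * t)) :
    ∑ d ∈ piAntidiag univ (2 * T), (Nat.multinomial univ d : ℝ) * ∏ i, (x i ^ d i * I (d i)) ≤
      (4 * (v * K)) ^ (2 * T) := by
  set h : ι → ℕ → ℝ := fun i k => if k = 0 then 1 else T * x i ^ 2
  have hh : ∀ i k, 0 ≤ h i k := fun i k => by simp only [h]; split_ifs <;> positivity
  have hvK : 0 ≤ (v * K) ^ (2 * T) := (even_two_mul T).pow_nonneg _
  have hterm : ∀ d ∈ piAntidiag univ (2 * T),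
      (Nat.multinomial univ d : ℝ) * ∏ i, (x i ^ d i * I (d i)) ≤
        (v * K) ^ (2 * T) * ∏ i, h i (d i) := by
    intro d hd
    have hsum : ∑ i, d i = 2 * T := (mem_piAntidiag.1 hd).1
    have hdle : ∀ i, d i ≤ 2 * T := fun i =>
      hsum ▸ single_le_sum (fun j _ => Nat.zero_le (d j)) (mem_univ i)
    calc (Nat.multinomial univ d : ℝ) * ∏ i, (x i ^ d i * I (d i))
        ≤ (Nat.multinomial univ d : ℝ) *
            ∏ i, (((d i : ℝ) / (2 * T)) ^ d i * (v * K) ^ d i * h i (d i)) := by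
          refine mul_le_mul_of_nonneg_left (prod_le_prod (fun i _ => ?_) fun i _ => ?_)
            (Nat.cast_nonneg _)
          · exact pow_mul_moment_nonneg hIodd hIeven _ _
          · exact pow_mul_moment_le (hx i) hK hI0 hIodd hIle (hdle i)
      _ = ((Nat.multinomial univ d : ℝ) * ∏ i, ((d i : ℝ) / ((∑ j, d j : ℕ) : ℝ)) ^ d i) *
            ((v * K) ^ (2 * T) * ∏ i, h i (d i)) := by
          rw [prod_mul_distrib, prod_mul_distrib, prod_pow_eq_pow_sum, hsum]
          push_cast
          ring
      _ ≤ 1 * ((v * K) ^ (2 * T) * ∏ i, h i (d i)) := by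
          exact mul_le_mul_of_nonneg_right (multinomial_mul_prod_div_pow_le_one d)
            (mul_nonneg hvK (prod_nonneg fun i _ => hh i _))
      _ = (v * K) ^ (2 * T) * ∏ i, h i (d i) := one_mul _
  have hexp : Real.exp T ≤ 4 ^ T := by
    rw [← Real.exp_one_pow]
    exact pow_le_pow_left₀ (Real.exp_pos 1).le (Real.exp_one_lt_d9.le.trans (by norm_num)) T
  calc ∑ d ∈ piAntidiag univ (2 * T), (Nat.multinomial univ d : ℝ) * ∏ i, (x i ^ d i * I (d i))
      ≤ ∑ d ∈ piAntidiag univ (2 * T), (v * K) ^ (2 * T) * ∏ i, h i (d i) := sum_le_sum hterm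
    _ = (v * K) ^ (2 * T) * ∑ d ∈ piAntidiag univ (2 * T), ∏ i, h i (d i) := (mul_sum ..).symm
    _ ≤ (v * K) ^ (2 * T) * (2 ^ (2 * T) * ∏ i, Real.exp (T * x i ^ 2)) := by
        refine mul_le_mul_of_nonneg_left ((sum_piAntidiag_prod_le _ h hh).trans ?_) hvK
        gcongr with i
        calc _ ≤ 1 + T * x i ^ 2 := sum_range_ite_div_two_pow_le (by positivity) _
          _ ≤ _ := by linarith [Real.add_one_le_exp (T * x i ^ 2)]
    _ = (v * K) ^ (2 * T) * (4 ^ T * Real.exp (T * ∑ i, x i ^ 2)) := by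
        rw [← Real.exp_sum, ← mul_sum, show (2 : ℝ) ^ (2 * T) = 4 ^ T by rw [pow_mul]; norm_num]
    _ ≤ (v * K) ^ (2 * T) * (4 ^ T * 4 ^ T) := by
        refine mul_le_mul_of_nonneg_left ?_ hvK
        gcongr
        refine le_trans ?_ hexp
        gcongr
        exact mul_le_of_le_one_right (Nat.cast_nonneg T) hx2
    _ = (4 * (v * K)) ^ (2 * T) := by ring

end MomentCombinatorics

section Moments

variable {Ω : Type*} [MeasurableSpace Ω] {μ : Measure Ω}

theorem mom_nonneg (q : ℝ) (X : Ω → ℝ) : 0 ≤ mom μ q X :=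
  Real.rpow_nonneg (integral_nonneg fun _ => Real.rpow_nonneg (abs_nonneg _) _) _

theorem mom_two_mul_eq (t : ℕ) (X : Ω → ℝ) :
    mom μ (2 * t) X = (∫ ω, X ω ^ (2 * t) ∂μ) ^ (1 / (2 * t : ℝ)) := by
  have h : ∀ ω, |X ω| ^ (2 * (t : ℝ)) = X ω ^ (2 * t) := fun ω => by
    rw [show 2 * (t : ℝ) = ((2 * t : ℕ) : ℝ) by push_cast; ring, Real.rpow_natCast,
      (even_two_mul t).pow_abs]
  simp only [mom, h]

theorem mom_two_mul_pow {t : ℕ} (ht : t ≠ 0) (X : Ω → ℝ) :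
    mom μ (2 * t) X ^ (2 * t) = ∫ ω, X ω ^ (2 * t) ∂μ := by
  rw [mom_two_mul_eq, ← Real.rpow_natCast,
    ← Real.rpow_mul (integral_nonneg fun ω => (even_two_mul t).pow_nonneg (X ω))]
  push_cast
  rw [one_div_mul_cancel (by positivity), Real.rpow_one]

theorem mom_two_mul_le {t : ℕ} (ht : t ≠ 0) {X : Ω → ℝ} {c : ℝ} (hc : 0 ≤ c)
    (h : ∫ ω, X ω ^ (2 * t) ∂μ ≤ c ^ (2 * t)) : mom μ (2 * t) X ≤ c :=
  (pow_le_pow_iff_left₀ (mom_nonneg _ X) hc (by omega)).1 (mom_two_mul_pow ht X ▸ h)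

theorem mom_two_mul_eq_zero_of_not_memLp {t : ℕ} (ht : t ≠ 0) {X : Ω → ℝ}
    (hX : AEStronglyMeasurable X μ) (h : ¬MemLp X (2 * t : ℕ) μ) : mom μ (2 * t) X = 0 := by
  rw [mom_two_mul_eq, integral_undef, Real.zero_rpow (by positivity)]
  intro hint
  refine h ((integrable_norm_rpow_iff hX (by simp [ht]) (ENNReal.natCast_ne_top _)).1
    (hint.congr ?_))
  filter_upwards with ω
  rw [ENNReal.toReal_natCast, Real.rpow_natCast, Real.norm_eq_abs, (even_two_mul t).pow_abs]

theorem integral_pow_le_of_mom_le {T t : ℕ} (hT : T ≠ 0) (ht : t ≠ 0) {a K : ℝ} (ha : 0 < a)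
    {X : Ω → ℝ} (h : (T / t : ℝ) * (1 / a) ^ (1 / (2 * t : ℝ)) * mom μ (2 * t) X ≤ K) :
    ∫ ω, X ω ^ (2 * t) ∂μ ≤ ((t : ℝ) / T) ^ (2 * t) * a * K ^ (2 * t) := by
  have hc : ((1 / a) ^ (1 / (2 * t : ℝ))) ^ (2 * t) = 1 / a := by
    rw [← Real.rpow_natCast, ← Real.rpow_mul (by positivity)]
    push_cast
    rw [one_div_mul_cancel (by positivity), Real.rpow_one]
  have hpow := pow_le_pow_left₀ (by have := mom_nonneg (μ := μ) (2 * t) X; positivity) h (2 * t)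
  rw [mul_pow, mul_pow, hc, mom_two_mul_pow ht] at hpow
  have hTt : ((t : ℝ) / T) ^ (2 * t) * (T / t) ^ (2 * t) = 1 := by
    rw [← mul_pow, div_mul_div_cancel₀', div_self, one_pow] <;> positivity
  calc ∫ ω, X ω ^ (2 * t) ∂μ
      = ((t : ℝ) / T) ^ (2 * t) * a *
          ((T / t : ℝ) ^ (2 * t) * (1 / a) * ∫ ω, X ω ^ (2 * t) ∂μ) := by
        field_simp
        rw [mul_assoc, hTt, mul_one]
    _ ≤ _ := by gcongr

theorem integral_pow_odd_eq_zero {X : Ω → ℝ} (hX : IdentDistrib X (fun ω => -X ω) μ μ) {k : ℕ}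
    (hk : Odd k) : ∫ ω, X ω ^ k ∂μ = 0 := by
  have h := (hX.comp (measurable_id.pow_const k)).integral_eq
  simp only [Function.comp_def, id, hk.neg_pow, integral_neg] at h
  linarith

end Moments

section Independence

variable {Ω : Type*} [MeasurableSpace Ω] {μ : Measure Ω} {ι : Type*} [Fintype ι]

theorem ProbabilityTheory.iIndepFun.integral_sum_pow [DecidableEq ι] {Z : ι → Ω → ℝ}
    (hind : iIndepFun Z μ) {N : ℕ} (hZ : ∀ i, MemLp (Z i) N μ) :
    ∫ ω, (∑ i, Z i ω) ^ N ∂μ =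
      ∑ d ∈ piAntidiag univ N, (Nat.multinomial univ d : ℝ) * ∏ i, ∫ ω, Z i ω ^ d i ∂μ := by
  have := hind.isProbabilityMeasure
  have hW : MemLp (fun ω => ∑ i, |Z i ω|) N μ := memLp_finsetSum _ fun i _ => (hZ i).abs
  have hint : ∀ d ∈ piAntidiag univ N, Integrable (fun ω => ∏ i, Z i ω ^ d i) μ := by
    intro d hd
    refine hW.integrable_norm_pow'.mono'
      (Finset.aestronglyMeasurable_fun_prod _ fun i _ => (hZ i).1.pow _) (ae_of_all _ fun ω => ?_)
    rw [Real.norm_eq_abs, Real.norm_of_nonneg (sum_nonneg fun i _ => abs_nonneg _),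
      ← (mem_piAntidiag.1 hd).1]
    exact abs_prod_pow_le_sum_abs_pow _ d
  simp_rw [sum_pow_eq_sum_piAntidiag]
  rw [integral_finsetSum _ fun d hd => (hint d hd).const_mul _]
  refine sum_congr rfl fun d _ => ?_
  rw [integral_const_mul, hind.integral_fun_prod_comp (f := fun i y => y ^ d i)
    (fun i => (hZ i).1.aemeasurable) fun i => (measurable_id.pow_const _).aestronglyMeasurable]

theorem memLp_of_memLp_sum_mul {Y : ι → Ω → ℝ} (hind : iIndepFun Y μ)
    (hsymm : ∀ i, IdentDistrib (Y i) (fun ω => -Y i ω) μ μ) {a : ι → ℝ}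
    {p : ℝ≥0∞} (h : MemLp (fun ω => ∑ i, Y i ω * a i) p μ) {j : ι} (hj : a j ≠ 0) :
    MemLp (Y j) p μ := by
  set ε : ι → ℝ := fun i => if i = j then 1 else -1
  have hflip : IdentDistrib (fun ω i => Y i ω) (fun ω i => ε i * Y i ω) μ μ := by
    refine IdentDistrib.pi (fun i => ?_) hind (hind.comp _ fun i => measurable_const_mul (ε i))
    by_cases hi : i = j
    · simpa [ε, hi] using IdentDistrib.refl (hsymm i).aemeasurable_fst
    · simpa [ε, hi] using hsymm i
  have h' : MemLp (fun ω => ∑ i, ε i * Y i ω * a i) p μ :=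
    (hflip.comp (u := fun y : ι → ℝ => ∑ i, y i * a i) (by fun_prop)).memLp_snd h
  have hsum : ∀ ω, ∑ i, Y i ω * a i + ∑ i, ε i * Y i ω * a i = 2 * a j * Y j ω := by
    intro ω
    rw [← sum_add_distrib, sum_eq_single j (fun i _ hi => by simp [ε, hi]) (by simp)]
    simp only [ε, if_pos]
    ring
  have hY : Y j = fun ω => (2 * a j)⁻¹ * (∑ i, Y i ω * a i + ∑ i, ε i * Y i ω * a i) := by
    funext ω
    rw [hsum, inv_mul_cancel_left₀ (by positivity)]
  rw [hY]
  exact (h.add h').const_mul _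

end Independence

section LinearForms

variable {Ω : Type*} [MeasurableSpace Ω] {μ : Measure Ω} {ι : Type*} [Fintype ι]
  {Y : ι → Ω → ℝ} {j : ι} {T : ℕ}

theorem integral_sum_mul_pow_le [DecidableEq ι] (hind : iIndepFun Y μ)
    (hident : ∀ i, IdentDistrib (Y i) (Y j) μ μ) (hsymm : IdentDistrib (Y j) (fun ω => -Y j ω) μ μ)
    (hY : MemLp (Y j) (2 * T : ℕ) μ) {x : ι → ℝ} {v K : ℝ} (hx : ∀ i, |x i| ≤ v)
    (hx2 : ∑ i, x i ^ 2 ≤ 1) (hK : 0 ≤ K)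
    (hmom : ∀ t : ℕ, 1 ≤ t → t ≤ T →
      ∫ ω, Y j ω ^ (2 * t) ∂μ ≤ ((t : ℝ) / T) ^ (2 * t) * (T * v ^ 2) * K ^ (2 * t)) :
    ∫ ω, (∑ i, Y i ω * x i) ^ (2 * T) ∂μ ≤ (4 * (v * K)) ^ (2 * T) := by
  have := hind.isProbabilityMeasure
  have hZind : iIndepFun (fun i ω => Y i ω * x i) μ :=
    hind.comp (fun i y => y * x i) fun i => measurable_mul_const (x i)
  have hmoments : ∀ i k, ∫ ω, (Y i ω * x i) ^ k ∂μ = x i ^ k * ∫ ω, Y j ω ^ k ∂μ := by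
    intro i k
    simp_rw [mul_pow, integral_mul_const]
    rw [mul_comm]
    exact congrArg _ ((hident i).comp (measurable_id.pow_const k)).integral_eq
  rw [hZind.integral_sum_pow fun i => ((hident i).symm.memLp_snd hY).mul_const (x i)]
  simp_rw [hmoments]
  exact sum_multinomial_mul_prod_moment_le hx hx2 hK (by simp)
    (fun k hk => integral_pow_odd_eq_zero hsymm hk)
    (fun k hk => integral_nonneg fun ω => hk.pow_nonneg _) hmom

theorem mom_sum_mul_eq_zero_of_not_memLp (hind : iIndepFun Y μ)
    (hident : ∀ i, IdentDistrib (Y i) (Y j) μ μ)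
    (hsymm : ∀ i, IdentDistrib (Y i) (fun ω => -Y i ω) μ μ) (hT : T ≠ 0)
    (hY : ¬MemLp (Y j) (2 * T : ℕ) μ) (x : ι → ℝ) :
    mom μ (2 * T) (fun ω => ∑ i, Y i ω * x i) = 0 := by
  by_cases hx : ∀ i, x i = 0
  · simp [mom_two_mul_eq, hx, hT]
  obtain ⟨i, hi⟩ := not_forall.1 hx
  refine mom_two_mul_eq_zero_of_not_memLp hT
    (aestronglyMeasurable_fun_sum _ fun i _ => (hident i).aestronglyMeasurable_fst.mul_const _)
    fun hS => hY ?_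
  exact (hident i).memLp_snd (memLp_of_memLp_sum_mul hind hsymm hS hi)

theorem mom_sum_mul_le (hind : iIndepFun Y μ)
    (hident : ∀ i, IdentDistrib (Y i) (Y j) μ μ)
    (hsymm : ∀ i, IdentDistrib (Y i) (fun ω => -Y i ω) μ μ) (hT : 1 ≤ T) {x : ι → ℝ} {v K : ℝ}
    (hv : 0 < v) (hx : ∀ i, |x i| ≤ v) (hx2 : ∑ i, x i ^ 2 ≤ 1)
    (hK : ∀ t : ℕ, 1 ≤ t → t ≤ T →
      (T / t : ℝ) * (1 / (T * v ^ 2)) ^ (1 / (2 * t : ℝ)) * mom μ (2 * t) (Y j) ≤ K) :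
    mom μ (2 * T) (fun ω => ∑ i, Y i ω * x i) ≤ 4 * (v * K) := by
  have hK0 : 0 ≤ K := (hK 1 le_rfl hT).trans' (by
    have := mom_nonneg (μ := μ) (2 * ((1 : ℕ) : ℝ)) (Y j)
    positivity)
  by_cases hY : MemLp (Y j) (2 * T : ℕ) μ
  · refine mom_two_mul_le (by omega) (by positivity)
      (integral_sum_mul_pow_le hind hident (hsymm j) hY hx hx2 hK0 fun t h1 h2 => ?_)
    exact integral_pow_le_of_mom_le (by omega) (by omega) (by positivity) (hK t h1 h2)
  · rw [mom_sum_mul_eq_zero_of_not_memLp hind hident hsymm (by omega) hY]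
    positivity

end LinearForms

theorem abs_le_linf {k : ℕ} (x : Fin k → ℝ) (i : Fin k) : |x i| ≤ linf x :=
  le_ciSup (f := fun i => |x i|) (Set.finite_range _).bddAbove i

theorem bddAbove_setOf_Icc (f : ℕ → ℝ) (a b : ℕ) :
    BddAbove {z | ∃ s, a ≤ s ∧ s ≤ b ∧ z = f s} := by
  refine ((Set.finite_Icc a b).image f).bddAbove.mono ?_
  rintro _ ⟨s, has, hsb, rfl⟩
  exact ⟨s, ⟨has, hsb⟩, rfl⟩

/-- Proposition 21 of the paper, moment bound for linear forms of
i.i.d. symmetric random variables. -/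
theorem statement12 :
    ∃ C : ℝ, 0 < C ∧
      ∀ (n T : ℕ) (Ω : Type) (_ : MeasurableSpace Ω) (μ : Measure Ω)
        (_ : IsProbabilityMeasure μ) (Y : Fin n → Ω → ℝ) (x : Fin n → ℝ) (v : ℝ)
        (hn : 0 < n),
        1 ≤ T →
        (∀ i, Measurable (Y i)) →
        iIndepFun Y μ →
        (∀ i j, Measure.map (Y i) μ = Measure.map (Y j) μ) →
        (∀ i, Measure.map (Y i) μ = Measure.map (fun ω => -(Y i ω)) μ) →
        l2 x ≤ 1 → linf x < v →
        mom μ (2 * (T : ℝ)) (fun ω => ∑ i, Y i ω * x i) ≤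
          C * (v * sSup {z : ℝ | ∃ t : ℕ, 1 ≤ t ∧ t ≤ T ∧
            z = ((T : ℝ) / (t : ℝ)) * (1 / ((T : ℝ) * v ^ 2)) ^ ((1 : ℝ) / (2 * t)) *
              mom μ (2 * (t : ℝ)) (Y ⟨0, hn⟩)}) := by
  refine ⟨4, by norm_num, fun n T Ω _ μ _ Y x v hn hT hmeas hind hident hsymm hl2 hlinf => ?_⟩
  refine mom_sum_mul_le (j := ⟨0, hn⟩) hind
    (fun i => ⟨(hmeas i).aemeasurable, (hmeas _).aemeasurable, hident i _⟩)
    (fun i => ⟨(hmeas i).aemeasurable, (hmeas i).neg.aemeasurable, hsymm i⟩) hT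
    ((abs_nonneg _).trans_lt ((abs_le_linf x ⟨0, hn⟩).trans_lt hlinf))
    (fun i => (abs_le_linf x i).trans hlinf.le)
    (by simpa using (Real.sqrt_le_left zero_le_one).1 hl2) fun t h1 h2 => ?_
  exact le_csSup (bddAbove_setOf_Icc _ _ _) ⟨t, h1, h2, rfl⟩
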